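/- arXiv:2509.14334 — 6 statements merged into one kernel-verified Lean document; each statement's English description precedes it below -/
import Mathlib

section
/- For every integer n ≥ 1, the central binomial coefficient ratio r_n = (1/4^n) * C(2n, n) satisfies 1/(π(n + 4/π - 1)) ≤ r_n² ≤ 1/(π(n + 1/4)). -/
/-!
Since `r (n + 1) / r n = (2n + 1) / (2n + 2)`, the Wallis product satisfies
`W n * r n ^ 2 * (2n + 1) = 1`, so Wallis' formula gives `r n ^ 2 * (n + a) → 1 / π` for every
real shift `a`. The same ratio gives
`r (n+1) ^ 2 * (n + 1 + a) - r n ^ 2 * (n + a) = -r n ^ 2 * ((4a - 1) n + 3a - 1) / (2n + 2) ^ 2`,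
so for `a = 1/4` the sequence increases to `1 / π`, while for `a ≥ 3/11` it decreases to `1 / π`
from `n = 2` on. The constant `a = 4/π - 1` is the one making the lower bound an equality at
`n = 1`, and it exceeds `3/11` because `π < 22/7`.
-/

open Real

noncomputable def r (n : ℕ) : ℝ := (Nat.choose (2 * n) n : ℝ) / 4 ^ n

open Filter Topology

noncomputable def shiftedRSq (a : ℝ) (n : ℕ) : ℝ := r n ^ 2 * (n + a)

lemma r_one : r 1 = 1 / 2 := by norm_num [r]

lemma r_succ (n : ℕ) : r (n + 1) = r n * ((2 * n + 1) / (2 * n + 2)) := by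
  have h : ((n : ℝ) + 1) * Nat.choose (2 * (n + 1)) (n + 1)
      = 2 * (2 * n + 1) * Nat.choose (2 * n) n := by
    exact_mod_cast Nat.succ_mul_centralBinom_succ n
  unfold r
  rw [pow_succ]
  field_simp
  linear_combination 2 * h

lemma wallis_W_mul_r_sq (n : ℕ) : Wallis.W n * (r n ^ 2 * (2 * n + 1)) = 1 := by
  induction n with
  | zero => simp [Wallis.W, r]
  | succ n ih =>
    rw [Wallis.W_succ, r_succ]
    push_cast
    field_simp
    linear_combination (2 * (n : ℝ) + 3) * ih

lemma tendsto_shiftedRSq (a : ℝ) : Tendsto (shiftedRSq a) atTop (𝓝 π⁻¹) := by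
  have hW : Tendsto (fun n => (Wallis.W n)⁻¹) atTop (𝓝 (π / 2)⁻¹) :=
    Wallis.tendsto_W_nhds_pi_div_two.inv₀ pi_div_two_pos.ne'
  have hlim := hW.mul (tendsto_add_mul_div_add_mul_atTop_nhds a 1 1 two_ne_zero)
  rw [show (π / 2)⁻¹ * (1 / 2) = π⁻¹ by field_simp] at hlim
  refine hlim.congr fun n => ?_
  rw [shiftedRSq, inv_eq_of_mul_eq_one_right (wallis_W_mul_r_sq n)]
  field_simp
  ring

lemma shiftedRSq_succ_sub (a : ℝ) (n : ℕ) :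
    shiftedRSq a (n + 1) - shiftedRSq a n
      = -(r n ^ 2 * ((4 * a - 1) * n + 3 * a - 1)) / (2 * n + 2) ^ 2 := by
  rw [shiftedRSq, shiftedRSq, r_succ]
  push_cast
  field_simp
  ring

lemma monotone_shiftedRSq_one_div_four : Monotone (shiftedRSq (1 / 4)) := by
  refine monotone_nat_of_le_succ fun n => sub_nonneg.mp ?_
  rw [shiftedRSq_succ_sub]
  apply div_nonneg _ (by positivity)
  nlinarith [sq_nonneg (r n)]

lemma shiftedRSq_succ_le {a : ℝ} (ha : 3 / 11 ≤ a) {n : ℕ} (hn : 2 ≤ n) :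
    shiftedRSq a (n + 1) ≤ shiftedRSq a n := by
  refine sub_nonpos.mp ?_
  rw [shiftedRSq_succ_sub]
  have hn' : (2 : ℝ) ≤ n := by exact_mod_cast hn
  refine div_nonpos_of_nonpos_of_nonneg (neg_nonpos.mpr (mul_nonneg (sq_nonneg _) ?_))
    (by positivity)
  nlinarith

lemma inv_pi_le_shiftedRSq {a : ℝ} (ha : 3 / 11 ≤ a) {n : ℕ} (hn : 2 ≤ n) :
    π⁻¹ ≤ shiftedRSq a n := by
  have hanti : Antitone fun k => shiftedRSq a (k + 2) :=
    antitone_nat_of_succ_le fun k => shiftedRSq_succ_le ha (by omega)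
  have h := hanti.le_of_tendsto ((tendsto_shiftedRSq a).comp (tendsto_add_atTop_nat 2)) (n - 2)
  rwa [Nat.sub_add_cancel hn] at h

lemma three_div_eleven_le_four_div_pi_sub_one : (3 : ℝ) / 11 ≤ 4 / π - 1 := by
  have : (14 : ℝ) / 11 ≤ 4 / π := by
    rw [le_div_iff₀ pi_pos]
    linarith [pi_lt_d4]
  linarith

lemma inv_pi_le_shiftedRSq_four_div_pi_sub_one {n : ℕ} (hn : 1 ≤ n) :
    π⁻¹ ≤ shiftedRSq (4 / π - 1) n := by
  obtain rfl | hn := hn.eq_or_lt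
  · rw [shiftedRSq, r_one]
    field_simp
    norm_num
  · exact inv_pi_le_shiftedRSq three_div_eleven_le_four_div_pi_sub_one hn

theorem wallis_chen_qi (n : ℕ) (hn : 1 ≤ n) :
    1 / (π * (n + 4 / π - 1)) ≤ (r n) ^ 2 ∧ (r n) ^ 2 ≤ 1 / (π * (n + 1 / 4)) := by
  have hlower := inv_pi_le_shiftedRSq_four_div_pi_sub_one hn
  have hupper : shiftedRSq (1 / 4) n ≤ π⁻¹ :=
    monotone_shiftedRSq_one_div_four.ge_of_tendsto (tendsto_shiftedRSq _) n
  have hshift : 0 < (n : ℝ) + (4 / π - 1) := by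
    have : (1 : ℝ) ≤ n := by exact_mod_cast hn
    linarith [three_div_eleven_le_four_div_pi_sub_one]
  rw [shiftedRSq] at hlower hupper
  simp only [one_div, mul_inv, ← div_eq_mul_inv, add_sub_assoc] at hupper ⊢
  exact ⟨(div_le_iff₀ hshift).mpr hlower, (le_div_iff₀ (by positivity)).mpr hupper⟩
end

section
/- The sequence α_n := (∑_{j=0}^{n-1} r_j²) − log(n)/π is monotonically increasing in n ≥ 1, where r_0 = 1 and r_j = C(2j,j)/4^j. -/
open Real Filter

noncomputable def α (n : ℕ) : ℝ := (∑ j ∈ Finset.range n, (r j) ^ 2) - Real.log n / π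

lemma choose_cast_eq (n : ℕ) :
    ((Nat.choose (2 * n) n : ℕ) : ℝ) * n.factorial * n.factorial = ((2 * n).factorial : ℝ) := by
  have h := Nat.choose_mul_factorial_mul_factorial (show n ≤ 2 * n by omega)
  have h2 : 2 * n - n = n := by omega
  rw [h2] at h
  exact_mod_cast h

lemma r_pos (n : ℕ) : 0 < r n := by
  have : 0 < Nat.choose (2 * n) n := Nat.choose_pos (by omega)
  unfold r
  positivity

lemma W_mul_eq (n : ℕ) : Real.Wallis.W n * ((2 * n + 1) * r n ^ 2) = 1 := by
  rw [Real.Wallis.W_eq_factorial_ratio, r, div_pow]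
  have h := choose_cast_eq n
  have hf : ((n.factorial : ℝ)) ≠ 0 := by positivity
  have h2n : ((2 * n).factorial : ℝ) ≠ 0 := by positivity
  have h4 : ((4:ℝ) ^ n) ≠ 0 := by positivity
  have h21 : ((2 * n : ℕ) : ℝ) + 1 ≠ 0 := by positivity
  have h4' : ((4:ℝ) ^ n) ^ 2 = 2 ^ (4 * n) := by
    rw [show (4:ℝ) = 2 ^ 2 by norm_num, ← pow_mul, ← pow_mul]; ring_nf
  field_simp
  rw [← h, ← h4']
  ring

lemma W_lower (n : ℕ) : ∀ m, n ≤ m →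
    Real.Wallis.W n * (1 + 1 / (2 * (2 * (n:ℝ) + 1)) - 1 / (2 * (2 * (m:ℝ) + 1)))
      ≤ Real.Wallis.W m := by
  intro m hm
  induction m, hm using Nat.le_induction with
  | base => simp
  | succ m hm ih =>
    rw [Real.Wallis.W_succ]
    have hWn := Real.Wallis.W_pos n
    have hWm := Real.Wallis.W_pos m
    set q : ℝ := (2 * (m:ℝ) + 2) / (2 * (m:ℝ) + 1) * ((2 * (m:ℝ) + 2) / (2 * (m:ℝ) + 3)) with hq
    have hm1 : (0:ℝ) < 2 * (m:ℝ) + 1 := by positivity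
    have hm3 : (0:ℝ) < 2 * (m:ℝ) + 3 := by positivity
    have hn1 : (0:ℝ) < 2 * (n:ℝ) + 1 := by positivity
    have hq1 : 1 < q := by
      rw [hq, div_mul_div_comm, lt_div_iff₀ (by positivity)]
      nlinarith
    have hg1 : 1 ≤ 1 + 1 / (2 * (2 * (n:ℝ) + 1)) - 1 / (2 * (2 * (m:ℝ) + 1)) := by
      have hle : 1 / (2 * (2 * (m:ℝ) + 1)) ≤ 1 / (2 * (2 * (n:ℝ) + 1)) := by
        apply div_le_div_of_nonneg_left (by norm_num) (by positivity)
        have : (n:ℝ) ≤ (m:ℝ) := by exact_mod_cast hm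
        linarith
      linarith
    have key : (1 + 1 / (2 * (2 * (n:ℝ) + 1)) - 1 / (2 * (2 * ((m:ℝ)+1) + 1)))
        ≤ (1 + 1 / (2 * (2 * (n:ℝ) + 1)) - 1 / (2 * (2 * (m:ℝ) + 1))) * q := by
      have hx : 1 / (2 * (2 * (m:ℝ) + 1)) - 1 / (2 * (2 * ((m:ℝ)+1) + 1)) = q - 1 := by
        rw [hq, div_mul_div_comm]
        field_simp
        ring
      nlinarith [mul_le_mul_of_nonneg_right hg1 (le_of_lt (lt_trans one_pos hq1))]
    have hcast : ((m+1 : ℕ) : ℝ) = (m:ℝ) + 1 := by push_cast; ring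
    rw [hcast]
    calc Real.Wallis.W n * (1 + 1 / (2 * (2 * (n:ℝ) + 1)) - 1 / (2 * (2 * ((m:ℝ)+1) + 1)))
        ≤ Real.Wallis.W n * ((1 + 1 / (2 * (2 * (n:ℝ) + 1)) - 1 / (2 * (2 * (m:ℝ) + 1))) * q) :=
          by apply mul_le_mul_of_nonneg_left key hWn.le
      _ = (Real.Wallis.W n * (1 + 1 / (2 * (2 * (n:ℝ) + 1)) - 1 / (2 * (2 * (m:ℝ) + 1)))) * q := by ring
      _ ≤ Real.Wallis.W m * q := mul_le_mul_of_nonneg_right ih (by positivity)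

lemma W_upper (n : ℕ) :
    Real.Wallis.W n * (1 + 1 / (2 * (2 * (n:ℝ) + 1))) ≤ π / 2 := by
  have h1 : Filter.Tendsto (fun m : ℕ =>
      Real.Wallis.W n * (1 + 1 / (2 * (2 * (n:ℝ) + 1)) - 1 / (2 * (2 * (m:ℝ) + 1))))
      atTop (nhds (Real.Wallis.W n * (1 + 1 / (2 * (2 * (n:ℝ) + 1)) - 0))) := by
    apply Filter.Tendsto.const_mul
    apply Filter.Tendsto.const_sub
    apply Filter.Tendsto.div_atTop tendsto_const_nhds
    apply Filter.tendsto_atTop_mono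
      (fun m : ℕ => by nlinarith [Nat.cast_nonneg (α := ℝ) m] : ∀ m : ℕ, (m:ℝ) ≤ 2 * (2 * (m:ℝ) + 1))
    exact tendsto_natCast_atTop_atTop
  rw [sub_zero] at h1
  exact le_of_tendsto_of_tendsto h1 Real.Wallis.tendsto_W_nhds_pi_div_two
    (Filter.eventually_atTop.mpr ⟨n, W_lower n⟩)

lemma pi_r_sq (n : ℕ) : (4*(n:ℝ)+3)/(2*(n:ℝ)+1)^2 ≤ π * r n ^ 2 := by
  have h1 := W_mul_eq n
  have h2 := W_upper n
  have hr := r_pos n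
  have hA : (0:ℝ) < 2*(n:ℝ)+1 := by positivity
  rw [div_le_iff₀ (by positivity)]
  have h3 : 1 + 1 / (2 * (2 * (n:ℝ) + 1)) = (4*(n:ℝ)+3)/(2*(2*(n:ℝ)+1)) := by
    field_simp; ring
  rw [h3, mul_div_assoc', div_le_iff₀ (by positivity)] at h2
  -- h2 : W n * (4n+3) ≤ π/2 * (2*(2n+1))
  nlinarith [mul_le_mul_of_nonneg_right h2 (le_of_lt (mul_pos hA (pow_pos hr 2))), h1,
    mul_pos hA (pow_pos hr 2)]

lemma log_le_half (t : ℝ) (ht : 1 ≤ t) : Real.log t ≤ (t - t⁻¹)/2 := by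
  have hder : ∀ x : ℝ, 1 ≤ x → HasDerivAt (fun x : ℝ => (x - x⁻¹)/2 - Real.log x)
      ((1 - -(x^2)⁻¹)/2 - x⁻¹) x := by
    intro x hx
    have hx0 : x ≠ 0 := ne_of_gt (lt_of_lt_of_le one_pos hx)
    exact (((hasDerivAt_id x).sub (hasDerivAt_inv hx0)).div_const 2).sub
      (Real.hasDerivAt_log hx0)
  have hmono : MonotoneOn (fun x : ℝ => (x - x⁻¹)/2 - Real.log x) (Set.Ici 1) := by
    apply monotoneOn_of_deriv_nonneg (convex_Ici 1)
    · exact fun x hx => ((hder x hx).continuousAt).continuousWithinAt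
    · intro x hx
      rw [interior_Ici] at hx
      exact ((hder x (le_of_lt hx)).differentiableAt).differentiableWithinAt
    · intro x hx
      rw [interior_Ici] at hx
      rw [(hder x (le_of_lt hx)).deriv]
      have hx0 : (0:ℝ) < x := lt_trans one_pos hx
      have h1 : (x^2)⁻¹ = (x⁻¹)^2 := (inv_pow x 2).symm
      rw [h1]
      nlinarith [sq_nonneg (1 - x⁻¹)]
  have h0 := hmono (Set.mem_Ici.mpr le_rfl) (Set.mem_Ici.mpr ht) ht
  simp only [Real.log_one, inv_one] at h0
  norm_num at h0
  linarith

theorem alpha_monotone (n : ℕ) (hn : 1 ≤ n) : α n ≤ α (n + 1) := by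
  have hπ := Real.pi_pos
  have hn0 : (0:ℝ) < n := by exact_mod_cast hn
  have hn1 : (1:ℝ) ≤ n := by exact_mod_cast hn
  have hr := r_pos n
  set t : ℝ := ((n:ℝ)+1)/n with htdef
  have ht1 : 1 ≤ t := by rw [htdef, le_div_iff₀ hn0]; linarith
  have hlt := log_le_half t ht1
  have hval : (t - t⁻¹)/2 = (2*(n:ℝ)+1)/(2*(n:ℝ)*((n:ℝ)+1)) := by
    rw [htdef]; rw [inv_div]; field_simp; ring
  have h2 : (2*(n:ℝ)+1)/(2*(n:ℝ)*((n:ℝ)+1)) ≤ (4*(n:ℝ)+3)/(2*(n:ℝ)+1)^2 := by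
    rw [div_le_div_iff₀ (by positivity) (by positivity)]; nlinarith
  have h3 := pi_r_sq n
  have hlog : Real.log ((n:ℝ)+1) - Real.log n = Real.log t := by
    rw [htdef, Real.log_div (by positivity) (ne_of_gt hn0)]
  have key : Real.log ((n:ℝ)+1) - Real.log n ≤ π * r n ^ 2 := by
    rw [hlog]; linarith
  unfold α
  rw [Finset.sum_range_succ]
  have hc : ((n+1:ℕ):ℝ) = (n:ℝ)+1 := by push_cast; ring
  rw [hc]
  have hfin : Real.log ((n:ℝ)+1)/π - Real.log n/π ≤ r n ^ 2 := by
    rw [div_sub_div_same, div_le_iff₀ hπ]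
    nlinarith [key]
  linarith
end

section
/- The improper integral ∫_0^{π/2} (1/sin(x) − 1/x) dx equals log(4/π). -/
/-!
On `(0, π)` the function `log (tan (x / 2)) - log x` is an antiderivative of `1 / sin x - 1 / x`.
It tends to `log (1 / 2)` at `0⁺` (since `tan (x / 2) / x → 1 / 2`) and equals `-log (π / 2)` at
`π / 2`, so the integral is `-log (π / 2) - log (1 / 2) = log (4 / π)`. Integrability near `0`
comes from `0 ≤ 1 / sin x - 1 / x ≤ π x / 12`, a consequence of `x - x ^ 3 / 6 ≤ sin x` and
Jordan's inequality `2 x / π ≤ sin x`.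
-/

open Set Filter Topology

namespace Real

lemma one_div_le_one_div_sin {x : ℝ} (h0 : 0 < x) (hx : x < π) : 1 / x ≤ 1 / sin x :=
  one_div_le_one_div_of_le (sin_pos_of_pos_of_lt_pi h0 hx) (sin_le h0.le)

lemma one_div_sin_sub_one_div_le {x : ℝ} (h0 : 0 < x) (hx : x ≤ π / 2) :
    1 / sin x - 1 / x ≤ π / 12 * x := by
  have hjordan : 2 / π * x ≤ sin x := mul_le_sin h0.le hx
  have hcube : x - x ^ 3 / 6 ≤ sin x := sin_ge_sub_cube h0.le
  have hsin : 0 < sin x := lt_of_lt_of_le (by positivity) hjordan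
  rw [div_sub_div _ _ hsin.ne' h0.ne', div_le_iff₀ (by positivity)]
  have : 2 / π * x * π = 2 * x := by field_simp
  nlinarith [mul_le_mul_of_nonneg_left hjordan (by positivity : 0 ≤ π / 12 * x * x)]

lemma tendsto_one_div_sin_sub_one_div :
    Tendsto (fun x => 1 / sin x - 1 / x) (𝓝[>] 0) (𝓝 0) := by
  have hlim : Tendsto (fun x : ℝ => π / 12 * x) (𝓝[>] 0) (𝓝 0) := by
    simpa using ((continuous_const_mul (π / 12)).tendsto 0).mono_left nhdsWithin_le_nhds
  have hsmall : ∀ᶠ x in 𝓝[>] (0 : ℝ), x ∈ Ioo 0 (π / 2) :=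
    Ioo_mem_nhdsGT (by positivity)
  refine tendsto_of_tendsto_of_tendsto_of_le_of_le' tendsto_const_nhds hlim ?_ ?_
  · filter_upwards [hsmall] with x hx
    exact sub_nonneg.2 (one_div_le_one_div_sin hx.1 (by linarith [hx.2, pi_pos]))
  · filter_upwards [hsmall] with x hx
    exact one_div_sin_sub_one_div_le hx.1 hx.2.le

lemma continuousOn_one_div_sin_sub_one_div :
    ContinuousOn (fun x => 1 / sin x - 1 / x) (Ico 0 π) := by
  intro x hx
  rcases hx.1.eq_or_lt with rfl | h0
  · refine ContinuousWithinAt.mono ?_ Ico_subset_Ici_self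
    rw [← continuousWithinAt_Ioi_iff_Ici, ContinuousWithinAt]
    simpa using tendsto_one_div_sin_sub_one_div
  · have hsin : sin x ≠ 0 := (sin_pos_of_pos_of_lt_pi h0 hx.2).ne'
    exact ((continuousAt_const.div continuous_sin.continuousAt hsin).sub
      (continuousAt_const.div continuousAt_id h0.ne')).continuousWithinAt

lemma hasDerivAt_log_tan_half {x : ℝ} (h0 : 0 < x) (hx : x < π) :
    HasDerivAt (fun x => log (tan (x / 2))) (1 / sin x) x := by
  have hsin : 0 < sin (x / 2) := sin_pos_of_pos_of_lt_pi (by positivity) (by linarith)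
  have hcos : 0 < cos (x / 2) := cos_pos_of_mem_Ioo ⟨by linarith, by linarith⟩
  have htan : HasDerivAt (fun x => tan (x / 2)) (1 / cos (x / 2) ^ 2 * (1 / 2)) x :=
    ((hasDerivAt_tan hcos.ne').comp x ((hasDerivAt_id' x).div_const 2) :)
  convert htan.log (tan_eq_sin_div_cos _ ▸ div_pos hsin hcos).ne' using 1
  rw [tan_eq_sin_div_cos, show x = 2 * (x / 2) by ring, sin_two_mul]
  field_simp

lemma hasDerivAt_log_tan_half_sub_log {x : ℝ} (h0 : 0 < x) (hx : x < π) :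
    HasDerivAt (fun x => log (tan (x / 2)) - log x) (1 / sin x - 1 / x) x :=
  (hasDerivAt_log_tan_half h0 hx).sub (by simpa using hasDerivAt_log h0.ne')

lemma tendsto_tan_half_div_self : Tendsto (fun x => tan (x / 2) / x) (𝓝[≠] 0) (𝓝 (1 / 2)) := by
  have h : HasDerivAt (fun x => tan (x / 2)) (1 / cos (0 / 2) ^ 2 * (1 / 2)) 0 :=
    ((hasDerivAt_tan (by simp)).comp 0 ((hasDerivAt_id' 0).div_const 2) :)
  rw [hasDerivAt_iff_tendsto_slope] at h
  simpa [slope_fun_def, div_eq_inv_mul] using h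

lemma tendsto_log_tan_half_sub_log :
    Tendsto (fun x => log (tan (x / 2)) - log x) (𝓝[>] 0) (𝓝 (log (1 / 2))) := by
  refine ((continuousAt_log (by norm_num)).tendsto.comp
    (tendsto_tan_half_div_self.mono_left (nhdsGT_le_nhdsNE 0))).congr' ?_
  filter_upwards [Ioo_mem_nhdsGT pi_pos] with x hx
  have htan : 0 < tan (x / 2) :=
    tan_pos_of_pos_of_lt_pi_div_two (by linarith [hx.1]) (by linarith [hx.2])
  exact log_div htan.ne' hx.1.ne'

end Real

open Real

theorem csc_integral : ∫ x in (0:ℝ)..(π / 2), (1 / Real.sin x - 1 / x) = Real.log (4 / π) := by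
  have hpi : 0 < π / 2 := by positivity
  have hint : IntervalIntegrable (fun x => 1 / sin x - 1 / x) MeasureTheory.volume 0 (π / 2) :=
    (continuousOn_one_div_sin_sub_one_div.mono
      (Icc_subset_Ico_right (by linarith))).intervalIntegrable_of_Icc hpi.le
  have hderiv : ∀ x ∈ Ioo 0 (π / 2),
      HasDerivAt (fun x => log (tan (x / 2)) - log x) (1 / sin x - 1 / x) x := fun x hx =>
    hasDerivAt_log_tan_half_sub_log hx.1 (by linarith [hx.2])
  have hright : Tendsto (fun x => log (tan (x / 2)) - log x) (𝓝[<] (π / 2)) (𝓝 (-log (π / 2))) := by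
    have := (hasDerivAt_log_tan_half_sub_log hpi (by linarith)).continuousAt.tendsto
    simpa [show π / 2 / 2 = π / 4 by ring] using this.mono_left nhdsWithin_le_nhds
  rw [intervalIntegral.integral_eq_sub_of_hasDerivAt_of_tendsto hpi hderiv hint
      tendsto_log_tan_half_sub_log hright,
    show 4 / π = (π / 2 * (1 / 2))⁻¹ by field_simp; norm_num, log_inv,
    log_mul (by positivity) (by norm_num)]
  ring
end

section
/- The integral ∫_0^1 log(x) · log(1−x) dx equals 2 − π²/6. -/
/-!
Expanding `-log (1 - x) = ∑ xⁿ⁺¹ / (n + 1)` turns the integrand into a series of functions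
that are nonnegative on `(0, 1)`, so it may be integrated termwise. Since
`∫₀¹ xⁿ⁺¹ log x dx = -1 / (n + 2)²`, the integral is
`∑ 1 / ((n + 1) (n + 2)²) = ∑ (1 / (n + 1) - 1 / (n + 2)) - ∑ 1 / (n + 2)²`,
which is `1 - (ζ(2) - 1)`.
-/

open Real

open MeasureTheory Filter Set Topology

namespace Real

lemma intervalIntegrable_pow_mul_log (n : ℕ) (a b : ℝ) :
    IntervalIntegrable (fun x => x ^ n * log x) volume a b :=
  intervalIntegral.intervalIntegrable_log'.continuousOn_mul (continuous_pow n).continuousOn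

lemma integral_pow_mul_log_zero_one (n : ℕ) :
    ∫ x in (0:ℝ)..1, x ^ n * log x = -1 / (n + 1) ^ 2 := by
  have hn : (n + 1 : ℝ) ≠ 0 := by positivity
  let F : ℝ → ℝ := fun x => x ^ (n + 1) * log x / (n + 1) - x ^ (n + 1) / (n + 1) ^ 2
  -- `x ^ (n + 1) * log x = x ^ n * (x * log x)` is continuous at `0` too, where `log 0 = 0`.
  have hF : Continuous F := by
    simp_rw [F, pow_succ, mul_assoc]
    exact ((continuous_pow n).mul continuous_mul_log).div_const _ |>.sub (by fun_prop)
  have hF' (x : ℝ) (hx : x ∈ Ioo (0 : ℝ) 1) : HasDerivAt F (x ^ n * log x) x := by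
    have := (((hasDerivAt_pow (n + 1) x).mul (hasDerivAt_log hx.1.ne')).div_const (n + 1)).sub
      ((hasDerivAt_pow (n + 1) x).div_const ((n + 1) ^ 2))
    refine this.congr_deriv ?_
    rw [Nat.add_sub_cancel, pow_succ]
    field_simp [hx.1.ne']
    push_cast
    ring
  rw [intervalIntegral.integral_eq_sub_of_hasDerivAt_of_le zero_le_one hF.continuousOn hF'
    (intervalIntegrable_pow_mul_log n 0 1)]
  simp [F, neg_div]

lemma hasSum_log_mul_log_one_sub {x : ℝ} (hx : |x| < 1) :
    HasSum (fun n : ℕ => -(x ^ (n + 1) * log x) / (n + 1)) (log x * log (1 - x)) := by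
  have h := (hasSum_pow_div_log_of_abs_lt_one hx).mul_left (-log x)
  rw [neg_mul_neg] at h
  exact h.congr_fun fun n => by ring

end Real

lemma hasSum_sub_succ_of_antitone {f : ℕ → ℝ} {l : ℝ} (hf : Antitone f)
    (hl : Tendsto f atTop (𝓝 l)) : HasSum (fun n => f n - f (n + 1)) (f 0 - l) := by
  rw [hasSum_iff_tendsto_nat_of_nonneg (fun n => sub_nonneg.2 (hf n.le_succ))]
  simp_rw [Finset.sum_range_sub']
  exact tendsto_const_nhds.sub hl

lemma hasSum_one_div_succ_mul_succ_succ_sq :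
    HasSum (fun n : ℕ => 1 / ((n + 1) * (n + 2) ^ 2 : ℝ)) (2 - π ^ 2 / 6) := by
  have htel : HasSum (fun n : ℕ => 1 / (n + 1 : ℝ) - 1 / (n + 2)) 1 := by
    have := hasSum_sub_succ_of_antitone (f := fun n : ℕ => 1 / (n + 1 : ℝ)) ?_
      tendsto_one_div_add_atTop_nhds_zero_nat
    · simpa [add_assoc, one_add_one_eq_two] using this
    · exact fun m n h => one_div_le_one_div_of_le (by positivity) (by gcongr)
  have hzeta : HasSum (fun n : ℕ => 1 / (n + 2 : ℝ) ^ 2) (π ^ 2 / 6 - 1) := by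
    have := (hasSum_nat_add_iff' 2).2 hasSum_zeta_two
    simpa [Finset.sum_range_succ, add_assoc, one_add_one_eq_two] using this
  rw [show 2 - π ^ 2 / 6 = 1 - (π ^ 2 / 6 - 1) by ring]
  exact (htel.sub hzeta).congr_fun fun n => by field_simp; ring

lemma integral_eq_of_hasSum_of_nonneg {ι α : Type*} [Countable ι] [MeasurableSpace α]
    {μ : Measure α} {F : ι → α → ℝ} {f : α → ℝ} {a : ℝ} (hF : ∀ i, Integrable (F i) μ)
    (hF_nonneg : ∀ i, 0 ≤ᵐ[μ] F i) (hf : ∀ᵐ x ∂μ, HasSum (F · x) (f x))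
    (ha : HasSum (fun i => ∫ x, F i x ∂μ) a) : ∫ x, f x ∂μ = a := by
  have hnorm (i : ι) : ∫ x, ‖F i x‖ ∂μ = ∫ x, F i x ∂μ :=
    integral_congr_ae <| (hF_nonneg i).mono fun x hx => Real.norm_of_nonneg hx
  have hF_sum :=
    hasSum_integral_of_summable_integral_norm hF (by simpa only [hnorm] using ha.summable)
  rw [integral_congr_ae (hf.mono fun x hx => hx.tsum_eq.symm)]
  exact hF_sum.unique ha

theorem log_mul_log_integral :
    ∫ x in (0:ℝ)..1, Real.log x * Real.log (1 - x) = 2 - π ^ 2 / 6 := by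
  let F (n : ℕ) (x : ℝ) : ℝ := -(x ^ (n + 1) * log x) / (n + 1)
  have hF_integral (n : ℕ) : ∫ x in Ioo (0:ℝ) 1, F n x = 1 / ((n + 1) * (n + 2) ^ 2) := by
    rw [← integral_Ioc_eq_integral_Ioo, ← intervalIntegral.integral_of_le zero_le_one]
    simp only [F, intervalIntegral.integral_div, intervalIntegral.integral_neg,
      integral_pow_mul_log_zero_one]
    push_cast
    field_simp
    ring
  have hF_integrable (n : ℕ) : IntegrableOn (F n) (Ioo 0 1) :=
    (intervalIntegrable_iff_integrableOn_Ioo_of_le zero_le_one).1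
      ((intervalIntegrable_pow_mul_log (n + 1) 0 1).neg.div_const _)
  have hF_nonneg (n : ℕ) : 0 ≤ᵐ[volume.restrict (Ioo 0 1)] F n := by
    filter_upwards [ae_restrict_mem measurableSet_Ioo] with x hx
    have hlog : log x ≤ 0 := log_nonpos hx.1.le hx.2.le
    exact div_nonneg (neg_nonneg.2 (mul_nonpos_of_nonneg_of_nonpos (pow_nonneg hx.1.le _) hlog))
      (by positivity)
  rw [intervalIntegral.integral_of_le zero_le_one, integral_Ioc_eq_integral_Ioo]
  refine integral_eq_of_hasSum_of_nonneg hF_integrable hF_nonneg ?_ ?_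
  · filter_upwards [ae_restrict_mem measurableSet_Ioo] with x hx
    exact hasSum_log_mul_log_one_sub (abs_lt.2 ⟨by linarith [hx.1], hx.2⟩)
  · simpa only [hF_integral] using hasSum_one_div_succ_mul_succ_succ_sq
end

section
/- With G_n = ∑_{k=0}^{n} (C(2k,k)/4^k)² (the n-th Landau constant), the limit α_∞ := lim_{n→∞} (G_{n−1} − log(n)/π) exists and equals (γ + log 16)/π, where γ is the Euler–Mascheroni constant. -/
/-!
With `r k = C(2k, k) / 4 ^ k`, the convolution square of `r` is identically `1`, so
`∑ r k u ^ k = (1 - u)^(-1/2)`; since `∫₀^{π/2} sin^{2k} = (π/2) r k`, putting `u = x sin² θ`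
and integrating over `θ` gives `∑ r k ^ 2 x ^ k = (2/π) K(x)`, with `K` the complete elliptic
integral.
Wallis' product yields `1/(π(k + 1/3)) ≤ r k ^ 2 ≤ 1/(π(k + 1/4))`, so the defects
`d k = r (k+1) ^ 2 - 1/(π(k+1))` are absolutely summable, and by Abel's theorem `∑ d k` is the
limit as `x → 1⁻` of `∑ d k x^(k+1) = (2/π)(K(x) + log(1 - x)/2) - 1`. Writing `1 - x = m ^ 4`,
the substitution `u = tan θ` followed by the symmetry `u ↦ 1/(m² u)` of the new integrand shows
`K(x) + log(1 - x)/2 → log 4`. Hence `∑ d k = log 16/π - 1`, and the theorem follows from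
`G_m = 1 + H_m/π + ∑_{k<m} d k` and `H_m - log (m + 1) → γ`.
-/

open Real Filter Topology Set MeasureTheory

open Finset in
theorem Finset.Nat.two_mul_sum_antidiagonal_fst_mul {R : Type*} [CommSemiring R]
    {g : ℕ × ℕ → R} (hg : ∀ p, g p.swap = g p) (n : ℕ) :
    2 * ∑ p ∈ antidiagonal n, (p.1 : R) * g p = n * ∑ p ∈ antidiagonal n, g p := by
  rw [two_mul, mul_sum]
  nth_rewrite 2 [← Nat.sum_antidiagonal_swap]
  rw [← sum_add_distrib]
  refine sum_congr rfl fun p hp => ?_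
  rw [Prod.fst_swap, hg, ← add_mul, ← Nat.cast_add, mem_antidiagonal.mp hp]

noncomputable def centralBinomRatio (k : ℕ) : ℝ := (Nat.centralBinom k : ℝ) / 4 ^ k

section centralBinomRatio

local notation "r" => centralBinomRatio

theorem centralBinomRatio_zero : r 0 = 1 := by simp [centralBinomRatio]

theorem centralBinomRatio_succ (k : ℕ) : r (k + 1) = r k * ((2 * k + 1) / (2 * k + 2)) := by
  have h : ((k + 1 : ℕ) : ℝ) * Nat.centralBinom (k + 1) = 2 * (2 * k + 1) * Nat.centralBinom k := by
    exact_mod_cast Nat.succ_mul_centralBinom_succ k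
  simp only [centralBinomRatio, pow_succ]
  rw [div_mul_div_comm, div_eq_div_iff (by positivity) (by positivity)]
  push_cast at h
  linear_combination (2 * (4 : ℝ) ^ k) * h

theorem centralBinomRatio_pos (k : ℕ) : 0 < r k := by
  unfold centralBinomRatio
  have := Nat.centralBinom_pos k
  positivity

theorem centralBinomRatio_le_one (k : ℕ) : r k ≤ 1 := by
  rw [centralBinomRatio, div_le_one (by positivity)]
  exact_mod_cast Nat.centralBinom_le_four_pow k

open Finset in
theorem sum_antidiagonal_centralBinomRatio_mul (n : ℕ) :
    ∑ p ∈ antidiagonal n, r p.1 * r p.2 = 1 := by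
  induction n with
  | zero => simp [centralBinomRatio_zero]
  | succ n ih =>
    have step : ∑ p ∈ antidiagonal (n + 1), (p.1 : ℝ) * (r p.1 * r p.2)
        = ∑ p ∈ antidiagonal n, (p.1 + 1 / 2 : ℝ) * (r p.1 * r p.2) := by
      rw [Nat.sum_antidiagonal_succ]
      simp only [CharP.cast_eq_zero, zero_mul, zero_add]
      refine sum_congr rfl fun p _ => ?_
      rw [centralBinomRatio_succ]
      field_simp
      push_cast
      ring
    have moment := Nat.two_mul_sum_antidiagonal_fst_mul (g := fun p => r p.1 * r p.2)
      fun p => mul_comm _ _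
    have h := moment (n + 1)
    rw [step, sum_congr rfl fun p _ => add_mul (p.1 : ℝ) (1 / 2) (r p.1 * r p.2), sum_add_distrib,
      mul_add, moment n, ← mul_sum, ih] at h
    push_cast at h
    have : (n + 1 : ℝ) ≠ 0 := by positivity
    field_simp at h ⊢
    linarith

theorem summable_centralBinomRatio_mul_pow {u : ℝ} (h0 : 0 ≤ u) (h1 : u < 1) :
    Summable (fun k => r k * u ^ k) :=
  .of_nonneg_of_le (fun k => by have := centralBinomRatio_pos k; positivity)
    (fun k => mul_le_of_le_one_left (pow_nonneg h0 k) (centralBinomRatio_le_one k))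
    (summable_geometric_of_lt_one h0 h1)

open Finset in
theorem hasSum_centralBinomRatio_mul_pow {u : ℝ} (h0 : 0 ≤ u) (h1 : u < 1) :
    HasSum (fun k => r k * u ^ k) (√(1 - u))⁻¹ := by
  have hs := summable_centralBinomRatio_mul_pow h0 h1
  have hnorm : Summable (fun k => ‖r k * u ^ k‖) :=
    hs.congr fun k => (Real.norm_of_nonneg (by have := centralBinomRatio_pos k; positivity)).symm
  have hsq : (∑' k, r k * u ^ k) ^ 2 = (1 - u)⁻¹ := by
    rw [sq, tsum_mul_tsum_eq_tsum_sum_antidiagonal_of_summable_norm hnorm hnorm,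
      ← tsum_geometric_of_lt_one h0 h1]
    refine tsum_congr fun n => ?_
    rw [← one_mul (u ^ n), ← sum_antidiagonal_centralBinomRatio_mul n, sum_mul]
    refine sum_congr rfl fun p hp => ?_
    rw [← mem_antidiagonal.mp hp, pow_add]
    ring
  have hpos : 0 < ∑' k, r k * u ^ k :=
    hs.tsum_pos (fun k => by have := centralBinomRatio_pos k; positivity) 0
      (by simp [centralBinomRatio_zero])
  rw [← Real.sqrt_inv, ← hsq, Real.sqrt_sq hpos.le]
  exact hs.hasSum

theorem centralBinomRatio_sq_mul_W (k : ℕ) : r k ^ 2 * (2 * k + 1) * Wallis.W k = 1 := by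
  induction k with
  | zero => simp [centralBinomRatio_zero, Wallis.W]
  | succ n ih =>
    calc r (n + 1) ^ 2 * (2 * (n + 1 : ℕ) + 1) * Wallis.W (n + 1)
        = r n ^ 2 * (2 * n + 1) * Wallis.W n := by
          rw [Wallis.W_succ, centralBinomRatio_succ]
          push_cast
          field_simp
          ring
      _ = 1 := ih

theorem tendsto_pi_mul_add_mul_centralBinomRatio_sq (c : ℝ) :
    Tendsto (fun k : ℕ => π * (k + c) * r k ^ 2) atTop (𝓝 1) := by
  have hW : Tendsto (fun k : ℕ => (k + c) / (2 * k + 1) * (π / Wallis.W k)) atTop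
      (𝓝 (1 / 2 * (π / (π / 2)))) := by
    refine Tendsto.mul ?_ (tendsto_const_nhds.div Wallis.tendsto_W_nhds_pi_div_two (by positivity))
    have h2k : Tendsto (fun k : ℕ => 2 * (k : ℝ) + 1) atTop atTop :=
      tendsto_atTop_add_const_right _ _ (tendsto_natCast_atTop_atTop.const_mul_atTop two_pos)
    have := (tendsto_const_nhds (x := c - 1 / 2)).div_atTop h2k |>.const_add (1 / 2)
    rw [add_zero] at this
    refine this.congr fun k => ?_
    field_simp
    ring
  rw [show 1 / 2 * (π / (π / 2)) = 1 by field_simp] at hW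
  refine hW.congr fun k => ?_
  have hr : r k ^ 2 = 1 / ((2 * k + 1) * Wallis.W k) := by
    rw [eq_div_iff (by have := Wallis.W_pos k; positivity), ← mul_assoc]
    exact centralBinomRatio_sq_mul_W k
  rw [hr]
  field_simp

theorem centralBinomRatio_sq_succ_mul_sub (c : ℝ) (k : ℕ) :
    (k + 1 + c) * r (k + 1) ^ 2 - (k + c) * r k ^ 2
      = r k ^ 2 * (k + 1 - c * (4 * k + 3)) / (2 * k + 2) ^ 2 := by
  rw [centralBinomRatio_succ]
  field_simp
  ring

theorem pi_mul_add_quarter_mul_centralBinomRatio_sq_le_one (k : ℕ) :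
    π * (k + 1 / 4) * r k ^ 2 ≤ 1 := by
  refine Monotone.ge_of_tendsto (monotone_nat_of_le_succ fun n => ?_)
    (tendsto_pi_mul_add_mul_centralBinomRatio_sq (1 / 4)) k
  have h := centralBinomRatio_sq_succ_mul_sub (1 / 4) n
  have : 0 ≤ r n ^ 2 * (n + 1 - 1 / 4 * (4 * n + 3)) / (2 * n + 2) ^ 2 := by
    ring_nf; positivity
  push_cast
  rw [mul_assoc, mul_assoc]
  exact mul_le_mul_of_nonneg_left (by linarith) pi_pos.le

theorem one_le_pi_mul_add_third_mul_centralBinomRatio_sq (k : ℕ) :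
    1 ≤ π * (k + 1 / 3) * r k ^ 2 := by
  refine Antitone.le_of_tendsto (antitone_nat_of_succ_le fun n => ?_)
    (tendsto_pi_mul_add_mul_centralBinomRatio_sq (1 / 3)) k
  have h := centralBinomRatio_sq_succ_mul_sub (1 / 3) n
  have : r n ^ 2 * (n + 1 - 1 / 3 * (4 * n + 3)) / (2 * n + 2) ^ 2 ≤ 0 := by
    apply div_nonpos_of_nonpos_of_nonneg _ (by positivity)
    apply mul_nonpos_of_nonneg_of_nonpos (by positivity)
    linarith [(n.cast_nonneg : (0 : ℝ) ≤ n)]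
  push_cast
  rw [mul_assoc, mul_assoc]
  exact mul_le_mul_of_nonneg_left (by linarith) pi_pos.le

theorem integral_sin_pow_two_mul (k : ℕ) :
    ∫ θ in (0)..(π / 2), sin θ ^ (2 * k) = π / 2 * r k := by
  induction k with
  | zero => simp [centralBinomRatio_zero]
  | succ k ih =>
    rw [mul_add, mul_one, integral_sin_pow, ih, centralBinomRatio_succ]
    simp only [sin_zero, cos_pi_div_two]
    push_cast
    field_simp
    ring

noncomputable def ellipticK (x : ℝ) : ℝ := ∫ θ in (0)..(π / 2), (√(1 - x * sin θ ^ 2))⁻¹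

theorem hasSum_centralBinomRatio_sq_mul_pow {x : ℝ} (h0 : 0 ≤ x) (h1 : x < 1) :
    HasSum (fun k => r k ^ 2 * x ^ k) (2 / π * ellipticK x) := by
  have hu0 (θ : ℝ) : 0 ≤ x * sin θ ^ 2 := by positivity
  have hu1 (θ : ℝ) : x * sin θ ^ 2 < 1 := by nlinarith [sin_sq_le_one θ]
  have key := intervalIntegral.hasSum_integral_of_dominated_convergence (μ := volume)
    (a := 0) (b := π / 2) (F := fun k θ => r k * (x * sin θ ^ 2) ^ k) (fun k _ => x ^ k)
    (fun k => by fun_prop)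
    (fun k => .of_forall fun θ _ => by
      rw [Real.norm_of_nonneg (by have := centralBinomRatio_pos k; positivity), mul_pow]
      calc r k * (x ^ k * (sin θ ^ 2) ^ k) ≤ 1 * (x ^ k * 1) := by
            gcongr
            · exact centralBinomRatio_le_one k
            · exact pow_le_one₀ (by positivity) (sin_sq_le_one θ)
        _ = x ^ k := by ring)
    (.of_forall fun _ _ => summable_geometric_of_lt_one h0 h1)
    intervalIntegrable_const
    (.of_forall fun θ _ => hasSum_centralBinomRatio_mul_pow (hu0 θ) (hu1 θ))
  have hterm (k : ℕ) :
      ∫ θ in (0)..(π / 2), r k * (x * sin θ ^ 2) ^ k = π / 2 * (r k ^ 2 * x ^ k) := by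
    simp only [mul_pow, ← pow_mul, intervalIntegral.integral_const_mul, integral_sin_pow_two_mul]
    ring
  simp only [hterm] at key
  rw [show (fun k => r k ^ 2 * x ^ k) = fun k => 2 / π * (π / 2 * (r k ^ 2 * x ^ k)) by
    ext k; field_simp]
  exact key.mul_left (2 / π)

/-- The integrand of `ellipticK (1 - m ^ 4)` after the substitution `u = tan θ`. -/
noncomputable def tanIntegrand (m u : ℝ) : ℝ := (√(1 + u ^ 2) * √(1 + m ^ 4 * u ^ 2))⁻¹

theorem continuous_tanIntegrand (m : ℝ) : Continuous (tanIntegrand m) :=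
  Continuous.inv₀ (by fun_prop) fun u => by positivity

theorem tanIntegrand_le {m : ℝ} (hm0 : 0 < m) (hm1 : m ≤ 1) (u : ℝ) :
    tanIntegrand m u ≤ (m ^ 2)⁻¹ * (1 + u ^ 2)⁻¹ := by
  have h : m ^ 2 * √(1 + u ^ 2) ≤ √(1 + m ^ 4 * u ^ 2) := by
    rw [← Real.sqrt_sq (by positivity : 0 ≤ m ^ 2), ← Real.sqrt_mul (by positivity)]
    exact Real.sqrt_le_sqrt (by nlinarith [pow_le_one₀ hm0.le hm1 (n := 4), sq_nonneg u])
  calc tanIntegrand m u ≤ (√(1 + u ^ 2) * (m ^ 2 * √(1 + u ^ 2)))⁻¹ := by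
        unfold tanIntegrand; gcongr
    _ = (m ^ 2)⁻¹ * (1 + u ^ 2)⁻¹ := by
        rw [mul_left_comm, Real.mul_self_sqrt (by positivity), mul_inv]

theorem integrableOn_tanIntegrand {m : ℝ} (hm0 : 0 < m) (hm1 : m ≤ 1) (s : Set ℝ) :
    IntegrableOn (tanIntegrand m) s := by
  refine Integrable.integrableOn <| (integrable_inv_one_add_sq.const_mul (m ^ 2)⁻¹).mono'
    (continuous_tanIntegrand m).aestronglyMeasurable (.of_forall fun u => ?_)
  rw [Real.norm_of_nonneg (by unfold tanIntegrand; positivity)]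
  exact tanIntegrand_le hm0 hm1 u

theorem image_tan_Ioo_zero_pi_div_two : tan '' Ioo 0 (π / 2) = Ioi 0 := by
  ext y
  constructor
  · rintro ⟨θ, ⟨h0, h1⟩, rfl⟩
    exact tan_pos_of_pos_of_lt_pi_div_two h0 h1
  · intro hy
    exact ⟨arctan y, ⟨arctan_pos.2 hy, arctan_lt_pi_div_two y⟩, tan_arctan y⟩

theorem tanIntegrand_tan (m : ℝ) {θ : ℝ} (hθ : 0 < cos θ) :
    tanIntegrand m (tan θ) = cos θ ^ 2 * (√(1 - (1 - m ^ 4) * sin θ ^ 2))⁻¹ := by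
  have hA : 1 - (1 - m ^ 4) * sin θ ^ 2 = cos θ ^ 2 + m ^ 4 * sin θ ^ 2 := by
    linear_combination -sin_sq_add_cos_sq θ
  have h1 : 1 + tan θ ^ 2 = (cos θ ^ 2)⁻¹ := by
    rw [tan_eq_sin_div_cos, div_pow]
    field_simp
    linear_combination sin_sq_add_cos_sq θ
  have h2 : 1 + m ^ 4 * tan θ ^ 2 = (cos θ ^ 2 + m ^ 4 * sin θ ^ 2) / cos θ ^ 2 := by
    rw [tan_eq_sin_div_cos, div_pow]
    field_simp
  have hpos : 0 < cos θ ^ 2 + m ^ 4 * sin θ ^ 2 := by positivity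
  rw [tanIntegrand, h1, h2, hA, Real.sqrt_inv, Real.sqrt_div hpos.le, Real.sqrt_sq hθ.le]
  have := Real.sqrt_pos.2 hpos
  field_simp

theorem ellipticK_one_sub_pow_four (m : ℝ) :
    ellipticK (1 - m ^ 4) = ∫ u in Ioi 0, tanIntegrand m u := by
  have hcos {θ : ℝ} (hθ : θ ∈ Ioo 0 (π / 2)) : 0 < cos θ :=
    cos_pos_of_mem_Ioo ⟨by linarith [hθ.1, pi_pos], hθ.2⟩
  rw [ellipticK, intervalIntegral.integral_of_le (by positivity), integral_Ioc_eq_integral_Ioo,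
    ← image_tan_Ioo_zero_pi_div_two, integral_image_eq_integral_abs_deriv_smul measurableSet_Ioo
      (fun θ hθ => (hasDerivAt_tan (hcos hθ).ne').hasDerivWithinAt)
      (injOn_tan.mono (Ioo_subset_Ioo_left (by linarith [pi_pos])))]
  refine setIntegral_congr_fun measurableSet_Ioo fun θ hθ => ?_
  have := hcos hθ
  rw [tanIntegrand_tan m this, smul_eq_mul, abs_of_pos (by positivity)]
  field_simp

theorem tanIntegrand_inv_mul {m u : ℝ} (hm : 0 < m) (hu : 0 < u) :
    (m ^ 2 * u ^ 2)⁻¹ * tanIntegrand m (m ^ 2 * u)⁻¹ = tanIntegrand m u := by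
  have e1 : 1 + (m ^ 2 * u)⁻¹ ^ 2 = (1 + m ^ 4 * u ^ 2) / (m ^ 2 * u) ^ 2 := by
    field_simp
    ring
  have e2 : 1 + m ^ 4 * (m ^ 2 * u)⁻¹ ^ 2 = (1 + u ^ 2) / u ^ 2 := by
    field_simp
    ring
  rw [tanIntegrand, tanIntegrand, e1, e2, Real.sqrt_div (by positivity),
    Real.sqrt_div (by positivity), Real.sqrt_sq (by positivity), Real.sqrt_sq hu.le]
  have := Real.sqrt_pos.2 (by positivity : (0 : ℝ) < 1 + u ^ 2)
  have := Real.sqrt_pos.2 (by positivity : (0 : ℝ) < 1 + m ^ 4 * u ^ 2)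
  field_simp

theorem inv_sq_mul_lt_inv_iff {m u : ℝ} (hm : 0 < m) (hu : 0 < u) :
    (m ^ 2 * u)⁻¹ < m⁻¹ ↔ m⁻¹ < u := by
  rw [inv_lt_inv₀ (by positivity) hm, inv_lt_iff_one_lt_mul₀' hm, sq, mul_assoc,
    lt_mul_iff_one_lt_right hm]

theorem image_inv_mul_Ioi {m : ℝ} (hm : 0 < m) :
    (fun u => (m ^ 2 * u)⁻¹) '' Ioi m⁻¹ = Ioo 0 m⁻¹ := by
  ext y
  constructor
  · rintro ⟨u, hu, rfl⟩
    have hu0 : 0 < u := (inv_pos.2 hm).trans hu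
    exact ⟨by positivity, (inv_sq_mul_lt_inv_iff hm hu0).2 hu⟩
  · rintro ⟨hy0, hy⟩
    have hy' : (m ^ 2 * (m ^ 2 * y)⁻¹)⁻¹ = y := by field_simp
    refine ⟨(m ^ 2 * y)⁻¹, ?_, hy'⟩
    rwa [mem_Ioi, ← inv_sq_mul_lt_inv_iff hm (by positivity), hy']

theorem integral_Ioo_tanIntegrand_eq_integral_Ioi {m : ℝ} (hm : 0 < m) :
    ∫ u in Ioo 0 m⁻¹, tanIntegrand m u = ∫ u in Ioi m⁻¹, tanIntegrand m u := by
  have hpos {u : ℝ} (hu : u ∈ Ioi m⁻¹) : 0 < u := (inv_pos.2 hm).trans hu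
  rw [← image_inv_mul_Ioi hm, integral_image_eq_integral_abs_deriv_smul measurableSet_Ioi
    (f' := fun u => -(m ^ 2 * u ^ 2)⁻¹) (fun u hu => ?deriv) (fun a ha b hb hab => ?inj)]
  · refine setIntegral_congr_fun measurableSet_Ioi fun u hu => ?_
    have := hpos hu
    rw [smul_eq_mul, abs_neg, abs_of_pos (by positivity), tanIntegrand_inv_mul hm this]
  case deriv =>
    have := hpos hu
    have h := ((hasDerivAt_id' u).const_mul (m ^ 2)).inv (by positivity)
    rw [show -(m ^ 2 * 1) / (m ^ 2 * u) ^ 2 = -(m ^ 2 * u ^ 2)⁻¹ by field_simp] at h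
    exact h.hasDerivWithinAt
  case inj =>
    have := hpos ha
    have := hpos hb
    simpa [hm.ne'] using hab

theorem integral_Ioi_tanIntegrand {m : ℝ} (hm0 : 0 < m) (hm1 : m ≤ 1) :
    ∫ u in Ioi 0, tanIntegrand m u = 2 * ∫ u in (0)..m⁻¹, tanIntegrand m u := by
  rw [← Ioo_union_Ici_eq_Ioi (inv_pos.2 hm0),
    setIntegral_union ((Iio_disjoint_Ici le_rfl).mono_left Ioo_subset_Iio_self) measurableSet_Ici
      (integrableOn_tanIntegrand hm0 hm1 _) (integrableOn_tanIntegrand hm0 hm1 _),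
    integral_Ici_eq_integral_Ioi, ← integral_Ioo_tanIntegrand_eq_integral_Ioi hm0,
    intervalIntegral.integral_of_le (by positivity), integral_Ioc_eq_integral_Ioo]
  ring

theorem continuous_inv_sqrt_one_add_sq : Continuous fun u : ℝ => (√(1 + u ^ 2))⁻¹ :=
  Continuous.inv₀ (by fun_prop) fun u => by positivity

theorem integral_inv_sqrt_one_add_sq (M : ℝ) : ∫ u in (0)..M, (√(1 + u ^ 2))⁻¹ = arsinh M := by
  rw [intervalIntegral.integral_eq_sub_of_hasDerivAt (fun u _ => hasDerivAt_arsinh u)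
    (continuous_inv_sqrt_one_add_sq.intervalIntegrable _ _), arsinh_zero, sub_zero]

theorem inv_sqrt_mul_arsinh_inv_le_integral_tanIntegrand {m : ℝ} (hm : 0 < m) :
    (√(1 + m ^ 2))⁻¹ * arsinh m⁻¹ ≤ ∫ u in (0)..m⁻¹, tanIntegrand m u := by
  rw [← integral_inv_sqrt_one_add_sq, ← intervalIntegral.integral_const_mul]
  refine intervalIntegral.integral_mono_on (by positivity)
    ((continuous_inv_sqrt_one_add_sq.const_mul _).intervalIntegrable _ _)
    ((continuous_tanIntegrand m).intervalIntegrable _ _) fun u ⟨hu0, hu1⟩ => ?_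
  have hmu : (m * u) ^ 2 ≤ 1 :=
    pow_le_one₀ (by positivity) (by rwa [← le_inv_mul_iff₀ hm, mul_one])
  have : m ^ 4 * u ^ 2 ≤ m ^ 2 := by nlinarith
  rw [tanIntegrand, mul_inv, mul_comm]
  gcongr

theorem integral_tanIntegrand_le_arsinh_inv {m : ℝ} (hm : 0 ≤ m) :
    ∫ u in (0)..m⁻¹, tanIntegrand m u ≤ arsinh m⁻¹ := by
  rw [← integral_inv_sqrt_one_add_sq]
  refine intervalIntegral.integral_mono_on (by positivity)
    ((continuous_tanIntegrand m).intervalIntegrable _ _)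
    (continuous_inv_sqrt_one_add_sq.intervalIntegrable _ _) fun u _ => ?_
  rw [tanIntegrand, mul_inv]
  refine mul_le_of_le_one_right (by positivity) (inv_le_one_of_one_le₀ ?_)
  exact Real.one_le_sqrt.2 (by nlinarith [sq_nonneg (m ^ 2 * u)])

theorem arsinh_inv_add_log {m : ℝ} (hm : 0 < m) : arsinh m⁻¹ + log m = log (1 + √(1 + m ^ 2)) := by
  have h : √(1 + m⁻¹ ^ 2) = √(1 + m ^ 2) / m := by
    rw [show 1 + m⁻¹ ^ 2 = (1 + m ^ 2) / m ^ 2 by field_simp; ring, Real.sqrt_div (by positivity),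
      Real.sqrt_sq hm.le]
  rw [arsinh, h, ← Real.log_mul (by positivity) hm.ne']
  congr 1
  field_simp

theorem one_sub_inv_sqrt_one_add_sq_le {m : ℝ} (hm : 0 ≤ m) : 1 - (√(1 + m ^ 2))⁻¹ ≤ m := by
  have h : √(1 + m ^ 2) ≤ 1 + m := by
    rw [Real.sqrt_le_left (by positivity)]
    nlinarith
  have hs : 0 < √(1 + m ^ 2) := by positivity
  have h1 : (1 + m)⁻¹ ≤ (√(1 + m ^ 2))⁻¹ := inv_anti₀ hs h
  have h2 : 1 - m ≤ (1 + m)⁻¹ := by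
    rw [← one_div, le_div_iff₀ (by positivity)]
    nlinarith
  linarith

theorem tendsto_one_sub_inv_sqrt_mul_log :
    Tendsto (fun m => (1 - (√(1 + m ^ 2))⁻¹) * log m) (𝓝[>] 0) (𝓝 0) := by
  refine squeeze_zero_norm' ?_ (by simpa using (tendsto_log_mul_rpow_nhdsGT_zero one_pos).norm)
  filter_upwards [self_mem_nhdsWithin] with m (hm : 0 < m)
  have h0 : 0 ≤ 1 - (√(1 + m ^ 2))⁻¹ :=
    sub_nonneg.2 (inv_le_one_of_one_le₀ (Real.one_le_sqrt.2 (by nlinarith)))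
  rw [norm_mul, Real.norm_of_nonneg h0, Real.norm_eq_abs, abs_of_pos hm, mul_comm]
  gcongr
  exact one_sub_inv_sqrt_one_add_sq_le hm.le

theorem tendsto_integral_tanIntegrand_add_log :
    Tendsto (fun m => (∫ u in Ioi 0, tanIntegrand m u) + 2 * log m) (𝓝[>] 0) (𝓝 (log 4)) := by
  set c : ℝ → ℝ := fun m => (√(1 + m ^ 2))⁻¹
  set U : ℝ → ℝ := fun m => 2 * log (1 + √(1 + m ^ 2))
  have hU : Tendsto U (𝓝[>] 0) (𝓝 (log 4)) := by
    have : ContinuousAt U 0 := by fun_prop (disch := norm_num)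
    have h4 : U 0 = log 4 := by
      rw [show (4 : ℝ) = 2 ^ 2 by norm_num, Real.log_pow]
      norm_num [U]
    exact h4 ▸ this.tendsto.mono_left nhdsWithin_le_nhds
  have hc : Tendsto c (𝓝[>] 0) (𝓝 1) := by
    have : ContinuousAt c 0 := by fun_prop (disch := norm_num)
    simpa [c] using this.tendsto.mono_left nhdsWithin_le_nhds
  -- `∫ = 2 J` with `c m * arsinh m⁻¹ ≤ J ≤ arsinh m⁻¹`, and `2 (arsinh m⁻¹ + log m) = U m`
  have hlower := (hc.mul hU).add (tendsto_one_sub_inv_sqrt_mul_log.const_mul 2)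
  rw [one_mul, mul_zero, add_zero] at hlower
  refine tendsto_of_tendsto_of_tendsto_of_le_of_le' hlower hU ?_ ?_ <;>
    filter_upwards [Ioo_mem_nhdsGT one_pos] with m ⟨hm0, hm1⟩ <;>
    simp only [c, U] <;>
    rw [integral_Ioi_tanIntegrand hm0 hm1.le, ← arsinh_inv_add_log hm0]
  · linear_combination 2 * inv_sqrt_mul_arsinh_inv_le_integral_tanIntegrand hm0
  · linear_combination 2 * integral_tanIntegrand_le_arsinh_inv hm0.le

theorem tendsto_ellipticK_add_log :
    Tendsto (fun x => ellipticK x + log (1 - x) / 2) (𝓝[<] 1) (𝓝 (log 4)) := by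
  have hmap : Tendsto (fun x : ℝ => √(√(1 - x))) (𝓝[<] 1) (𝓝[>] 0) := by
    refine tendsto_nhdsWithin_of_tendsto_nhds_of_eventually_within _ ?_ ?_
    · have : ContinuousAt (fun x : ℝ => √(√(1 - x))) 1 := by fun_prop
      simpa using this.tendsto.mono_left nhdsWithin_le_nhds
    · filter_upwards [self_mem_nhdsWithin] with x (hx : x < 1)
      exact Real.sqrt_pos.2 (Real.sqrt_pos.2 (sub_pos.2 hx))
  refine (tendsto_integral_tanIntegrand_add_log.comp hmap).congr' ?_
  filter_upwards [self_mem_nhdsWithin] with x (hx : x < 1)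
  have h4 : √(√(1 - x)) ^ 4 = 1 - x := by
    rw [show 4 = 2 * 2 by rfl, pow_mul, Real.sq_sqrt (Real.sqrt_nonneg _),
      Real.sq_sqrt (sub_pos.2 hx).le]
  simp only [Function.comp_apply]
  set m := √(√(1 - x))
  rw [← ellipticK_one_sub_pow_four, h4, sub_sub_cancel, ← h4, Real.log_pow]
  push_cast
  ring

noncomputable def landauDefect (k : ℕ) : ℝ := r (k + 1) ^ 2 - 1 / (π * (k + 1))

theorem abs_landauDefect_le (k : ℕ) : |landauDefect k| ≤ 1 / ((k : ℝ) + 1) ^ 2 := by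
  have hu := pi_mul_add_quarter_mul_centralBinomRatio_sq_le_one (k + 1)
  have hl := one_le_pi_mul_add_third_mul_centralBinomRatio_sq (k + 1)
  push_cast at hu hl
  rw [landauDefect]
  set n : ℝ := k + 1
  set y := r (k + 1) ^ 2
  have hn : 1 ≤ n := by simp [n]
  have hny : π * n * y ≤ 1 := by nlinarith [pi_pos, sq_nonneg (r (k + 1))]
  have e1 : y - 1 / (π * n) + 1 / n ^ 2 = (π * n ^ 2 * y - n + π) / (π * n ^ 2) := by
    field_simp
  have e2 : 1 / (π * n) - y = (1 - π * n * y) / (π * n) := by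
    field_simp
  have h1 : 0 ≤ (π * n ^ 2 * y - n + π) / (π * n ^ 2) :=
    div_nonneg (by nlinarith [pi_gt_three]) (by positivity)
  have h2 : 0 ≤ (1 - π * n * y) / (π * n) := div_nonneg (by linarith) (by positivity)
  have h3 : 0 ≤ 1 / n ^ 2 := by positivity
  rw [abs_le]
  constructor <;> linarith

theorem summable_landauDefect : Summable landauDefect := by
  refine .of_norm_bounded ?_ abs_landauDefect_le
  exact_mod_cast (summable_nat_add_iff 1).2 (Real.summable_one_div_nat_pow.2 one_lt_two)

theorem hasSum_landauDefect_mul_pow {x : ℝ} (h0 : 0 ≤ x) (h1 : x < 1) :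
    HasSum (fun k => landauDefect k * x ^ (k + 1))
      (2 / π * (ellipticK x + log (1 - x) / 2) - 1) := by
  have hsq := (hasSum_nat_add_iff' 1).2 (hasSum_centralBinomRatio_sq_mul_pow h0 h1)
  have hlog := (Real.hasSum_pow_div_log_of_abs_lt_one (abs_lt.2 ⟨by linarith, h1⟩)).div_const π
  have h := (hsq.sub hlog).congr_fun fun k => (by
    unfold landauDefect
    field_simp : landauDefect k * x ^ (k + 1) = _)
  rw [Finset.sum_range_one, centralBinomRatio_zero, pow_zero, one_pow, mul_one] at h
  rwa [show 2 / π * (ellipticK x + log (1 - x) / 2) - 1 = 2 / π * ellipticK x - 1 - -log (1 - x) / π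
    by ring]

theorem tsum_landauDefect : ∑' k, landauDefect k = log 16 / π - 1 := by
  have habel := ((tendsto_id.mono_left nhdsWithin_le_nhds).mul
    (Real.tendsto_tsum_powerSeries_nhdsWithin_lt summable_landauDefect.hasSum.tendsto_sum_nat))
  rw [one_mul] at habel
  refine tendsto_nhds_unique habel ?_
  have hK := (tendsto_ellipticK_add_log.const_mul (2 / π)).sub_const 1
  rw [show 2 / π * log 4 - 1 = log 16 / π - 1 by
    rw [show (16 : ℝ) = 4 ^ 2 by norm_num, Real.log_pow]; push_cast; ring] at hK
  refine hK.congr' ?_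
  filter_upwards [Ioo_mem_nhdsLT zero_lt_one] with x ⟨hx0, hx1⟩
  rw [id, ← tsum_mul_left, ← (hasSum_landauDefect_mul_pow hx0.le hx1).tsum_eq]
  exact tsum_congr fun k => by ring

theorem sum_range_succ_centralBinomRatio_sq (m : ℕ) :
    ∑ k ∈ Finset.range (m + 1), r k ^ 2
      = 1 + ∑ k ∈ Finset.range m, landauDefect k + harmonic m / π := by
  rw [Finset.sum_range_succ', centralBinomRatio_zero, one_pow, add_comm, harmonic, Rat.cast_sum,
    Finset.sum_div, add_assoc, ← Finset.sum_add_distrib]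
  congr 1
  refine Finset.sum_congr rfl fun k _ => ?_
  rw [landauDefect]
  push_cast
  field_simp
  ring

end centralBinomRatio

theorem landau_constant_limit :
    Tendsto (fun n : ℕ =>
        (∑ k ∈ Finset.range n, ((Nat.choose (2 * k) k : ℝ) / 4 ^ k) ^ 2) - Real.log n / π)
      atTop (nhds ((Real.eulerMascheroniConstant + Real.log 16) / π)) := by
  rw [← tendsto_add_atTop_iff_nat 1]
  have h := (summable_landauDefect.hasSum.tendsto_sum_nat.const_add 1).add
    (tendsto_harmonic_sub_log_add_one.div_const π)
  rw [tsum_landauDefect, show 1 + (log 16 / π - 1) + eulerMascheroniConstant / π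
    = (eulerMascheroniConstant + log 16) / π by ring] at h
  refine h.congr fun m => ?_
  have hr (k : ℕ) : (Nat.choose (2 * k) k : ℝ) / 4 ^ k = centralBinomRatio k := rfl
  simp only [hr, sum_range_succ_centralBinomRatio_sq]
  push_cast
  ring
end

section
/- For integers 1 ≤ j ≤ n with j ≥ 2, ∑_{k=1}^{j−2} 1/(√(j−k)·√(n−k)) ≤ log(4n/(n−j+1)). -/
/-!
Since `d/dt [2 log (√(a + t) + √(b + t))] = 1 / (√(a + t) √(b + t))`, the `k`-th term of
the sum is at most the decrement of `G k = 2 log (√(j - k) + √(n - k))` from `k` to `k + 1`,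
so the sum telescopes to
`G 1 - G (j - 1) = 2 log (√(j - 1) + √(n - 1)) - 2 log (1 + √(n - j + 1))`.
The endpoint estimates `(√(j - 1) + √(n - 1))² ≤ 4 n` and
`(1 + √(n - j + 1))² ≥ n - j + 1` finish the proof.
-/

open Real

theorem one_div_two_mul_sqrt_le_sqrt_sub_sqrt_sub_one {x : ℝ} (hx : 1 ≤ x) :
    1 / (2 * √x) ≤ √x - √(x - 1) := by
  have hs : 0 < √x := sqrt_pos.mpr (by linarith)
  have ht : √(x - 1) ≤ √x := sqrt_le_sqrt (by linarith)
  have hst : √x ^ 2 - √(x - 1) ^ 2 = 1 := by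
    rw [sq_sqrt (by linarith), sq_sqrt (by linarith)]; ring
  rw [div_le_iff₀ (by positivity)]
  nlinarith [sqrt_nonneg (x - 1)]

theorem one_div_sqrt_mul_sqrt_le_two_mul_log_sub {x y : ℝ} (hx : 1 < x) (hy : 1 ≤ y) :
    1 / (√x * √y) ≤ 2 * log (√x + √y) - 2 * log (√(x - 1) + √(y - 1)) := by
  set a := √x + √y
  set b := √(x - 1) + √(y - 1)
  have hsx : 0 < √x := sqrt_pos.mpr (by linarith)
  have hsy : 0 < √y := sqrt_pos.mpr (by linarith)
  have ha : 0 < a := by positivity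
  have hb : 0 < b := add_pos_of_pos_of_nonneg (sqrt_pos.mpr (by linarith)) (sqrt_nonneg _)
  have hgap : 1 / (2 * √x) + 1 / (2 * √y) ≤ a - b := by
    linarith [one_div_two_mul_sqrt_le_sqrt_sub_sqrt_sub_one hx.le,
      one_div_two_mul_sqrt_le_sqrt_sub_sqrt_sub_one hy]
  have hlog : 1 - b / a ≤ log a - log b := by
    simpa [inv_div, log_div ha.ne' hb.ne'] using one_sub_inv_le_log_of_pos (div_pos ha hb)
  calc 1 / (√x * √y) = 2 * (1 / (2 * √x) + 1 / (2 * √y)) / a := by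
        field_simp; ring
    _ ≤ 2 * (a - b) / a := by gcongr
    _ = 2 * (1 - b / a) := by field_simp
    _ ≤ 2 * log a - 2 * log b := by linarith

theorem sum_range_one_div_sqrt_mul_sqrt_le_two_mul_log_sub {x y : ℝ} {m : ℕ} (hx : m < x)
    (hy : m ≤ y) :
    ∑ k ∈ Finset.range m, 1 / (√(x - k) * √(y - k)) ≤
      2 * log (√x + √y) - 2 * log (√(x - m) + √(y - m)) := by
  set G : ℕ → ℝ := fun k ↦ 2 * log (√(x - k) + √(y - k))
  calc ∑ k ∈ Finset.range m, 1 / (√(x - k) * √(y - k))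
      ≤ ∑ k ∈ Finset.range m, (G k - G (k + 1)) := by
        refine Finset.sum_le_sum fun k hk ↦ ?_
        have hkm : (k : ℝ) + 1 ≤ m := by exact_mod_cast Finset.mem_range.mp hk
        simpa only [G, Nat.cast_add_one, sub_sub] using
          one_div_sqrt_mul_sqrt_le_two_mul_log_sub (x := x - k) (y := y - k) (by linarith)
            (by linarith)
    _ = G 0 - G m := Finset.sum_range_sub' G m
    _ = 2 * log (√x + √y) - 2 * log (√(x - m) + √(y - m)) := by simp [G]

theorem two_mul_log_sqrt_add_sqrt_sub_le {j n : ℝ} (hj : 1 < j) (hjn : j ≤ n) :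
    2 * log (√(j - 1) + √(n - 1)) - 2 * log (1 + √(n - j + 1)) ≤
      log (4 * n / (n - j + 1)) := by
  have hd : 0 < n - j + 1 := by linarith
  have hA : 0 < √(j - 1) + √(n - 1) :=
    add_pos_of_pos_of_nonneg (sqrt_pos.mpr (by linarith)) (sqrt_nonneg _)
  have hA2 : (√(j - 1) + √(n - 1)) ^ 2 ≤ 4 * n := by
    have h1 : √(j - 1) ≤ √n := sqrt_le_sqrt (by linarith)
    have h2 : √(n - 1) ≤ √n := sqrt_le_sqrt (by linarith)
    nlinarith [sq_sqrt (show 0 ≤ n by linarith), sqrt_nonneg (j - 1), sqrt_nonneg (n - 1)]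
  have hB2 : n - j + 1 ≤ (1 + √(n - j + 1)) ^ 2 := by
    nlinarith [sq_sqrt hd.le, sqrt_nonneg (n - j + 1)]
  have hlogA : 2 * log (√(j - 1) + √(n - 1)) ≤ log (4 * n) := by
    simpa [log_pow] using log_le_log (pow_pos hA 2) hA2
  have hlogB : log (n - j + 1) ≤ 2 * log (1 + √(n - j + 1)) := by
    simpa [log_pow] using log_le_log hd hB2
  rw [log_div (mul_pos four_pos (by linarith)).ne' hd.ne']
  linarith

theorem double_sqrt_sum_bound (n j : ℕ) (h2 : 2 ≤ j) (hjn : j ≤ n) :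
    ∑ k ∈ Finset.Icc 1 (j - 2), 1 / (Real.sqrt ((j : ℝ) - k) * Real.sqrt ((n : ℝ) - k)) ≤
      Real.log (4 * (n : ℝ) / ((n : ℝ) - j + 1)) := by
  have hm : ((j - 2 : ℕ) : ℝ) = j - 2 := by push_cast [Nat.cast_sub h2]; ring
  have hjR : (2 : ℝ) ≤ j := by exact_mod_cast h2
  have hnR : (j : ℝ) ≤ n := by exact_mod_cast hjn
  calc ∑ k ∈ Finset.Icc 1 (j - 2), 1 / (√((j : ℝ) - k) * √((n : ℝ) - k))
      = ∑ k ∈ Finset.range (j - 2), 1 / (√((j - 1 : ℝ) - k) * √((n - 1 : ℝ) - k)) := by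
        rw [← Finset.Ico_add_one_right_eq_Icc, Finset.sum_Ico_eq_sum_range, Nat.add_sub_cancel]
        refine Finset.sum_congr rfl fun k _ ↦ ?_
        push_cast
        ring_nf
    _ ≤ 2 * log (√(j - 1 : ℝ) + √(n - 1 : ℝ)) -
          2 * log (√((j - 1 : ℝ) - (j - 2 : ℕ)) + √((n - 1 : ℝ) - (j - 2 : ℕ))) :=
        sum_range_one_div_sqrt_mul_sqrt_le_two_mul_log_sub (by rw [hm]; linarith)
          (by rw [hm]; linarith)
    _ = 2 * log (√(j - 1 : ℝ) + √(n - 1 : ℝ)) - 2 * log (1 + √((n : ℝ) - j + 1)) := by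
        rw [hm, show (j - 1 : ℝ) - (j - 2) = 1 by ring,
          show (n - 1 : ℝ) - (j - 2) = n - j + 1 by ring, sqrt_one]
    _ ≤ log (4 * n / (n - j + 1)) := two_mul_log_sqrt_add_sqrt_sub_le (by linarith) hnR
end
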